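/- arXiv:2311.16088 — 2 statements merged into one kernel-verified Lean document; each statement's English description precedes it below -/
import Mathlib

section
/- For $p \in [1,\infty)$, $d \in \mathbb{N}$, and $\alpha \in (0,d)$, the constant $R(d,p,\alpha) := 2^\alpha \int_{[0,1]^d} \big(\sum_{i=1}^d y_i^p\big)^{-\alpha/p} dy$ satisfies $R(d,p,\alpha) = \frac{2^\alpha p^{-d}}{\Gamma(\alpha/p)} \int_0^\infty t^{(\alpha-d)/p - 1}\, \gamma(1/p, t)^d \, dt$, where $\gamma(1/p,t) = \int_0^t z^{1/p-1} e^{-z} dz$ is the lower incomplete gamma function. -/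
/-!
Write `(∑ yᵢ^p)^(-α/p) = Γ(α/p)⁻¹ ∫₀^∞ t^(α/p-1) e^(-t ∑ yᵢ^p) dt` and exchange the two integrals
(Tonelli, for `ℝ≥0∞`-valued integrands, so no finiteness has to be checked first). For fixed `t`
the integral over the cube factorises into `d` copies of `∫₀¹ e^(-t y^p) dy`, which the substitution
`z = t y^p` turns into `p⁻¹ t^(-1/p) γ(1/p, t)`.
-/

open MeasureTheory Real intervalIntegral Set

noncomputable def lowerIncompleteGamma (s t : ℝ) : ℝ :=
  ∫ z in (0 : ℝ)..t, z ^ (s - 1) * exp (-z)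

lemma lowerIncompleteGamma_nonneg (s : ℝ) {t : ℝ} (ht : 0 ≤ t) :
    0 ≤ lowerIncompleteGamma s t :=
  integral_nonneg ht fun _ hz => mul_nonneg (rpow_nonneg hz.1 _) (exp_nonneg _)

lemma continuous_lowerIncompleteGamma {s : ℝ} (hs : 0 < s) :
    Continuous (lowerIncompleteGamma s) :=
  continuous_primitive (fun _ _ => (intervalIntegrable_rpow' (by linarith)).mul_continuousOn
    (continuous_exp.comp continuous_neg).continuousOn) 0

lemma lowerIncompleteGamma_one_div_eq_integral_exp_neg_mul_rpow {p t : ℝ} (hp : 0 < p)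
    (ht : 0 < t) :
    lowerIncompleteGamma (1 / p) t = p * t ^ (1 / p) * ∫ y in Ioo 0 1, exp (-(t * y ^ p)) := by
  have hmono : StrictMonoOn (fun y : ℝ => t * y ^ p) (Ici 0) := fun a ha b hb hab =>
    mul_lt_mul_of_pos_left (strictMonoOn_rpow_Ici_of_exponent_pos hp ha hb hab) ht
  have himage : (fun y : ℝ => t * y ^ p) '' Ioo 0 1 = Ioo 0 t := by
    rw [ContinuousOn.image_Ioo_of_strictMonoOn (f := fun y : ℝ => t * y ^ p) zero_le_one
      ((continuous_rpow_const hp.le).const_smul t).continuousOn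
      (hmono.mono Icc_subset_Ici_self)]
    simp [zero_rpow hp.ne']
  have hderiv : ∀ y ∈ Ioo (0 : ℝ) 1,
      HasDerivWithinAt (fun y : ℝ => t * y ^ p) (t * (p * y ^ (p - 1))) (Ioo 0 1) y :=
    fun y hy => ((hasDerivAt_rpow_const (Or.inl hy.1.ne')).const_mul t).hasDerivWithinAt
  have hsubst := integral_image_eq_integral_abs_deriv_smul measurableSet_Ioo hderiv
    (hmono.injOn.mono (Ioo_subset_Icc_self.trans Icc_subset_Ici_self))
    fun z => z ^ (1 / p - 1) * exp (-z)
  rw [himage] at hsubst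
  rw [lowerIncompleteGamma, integral_of_le ht.le, integral_Ioc_eq_integral_Ioo, hsubst,
    ← MeasureTheory.integral_const_mul]
  refine setIntegral_congr_fun measurableSet_Ioo fun y hy => ?_
  obtain ⟨hy0, -⟩ := hy
  have hjac : t * (p * y ^ (p - 1)) * (t * y ^ p) ^ (1 / p - 1) = p * t ^ (1 / p) := by
    have hexp : p * (1 / p - 1) = -(p - 1) := by field_simp; ring
    have htpow : t ^ (1 / p) = t * t ^ (1 / p - 1) := by
      rw [← rpow_one_add' ht.le (by simp [hp.ne'])]
      ring_nf
    rw [mul_rpow ht.le (by positivity), ← rpow_mul hy0.le, hexp, rpow_neg hy0.le, htpow]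
    field_simp
  simp only [smul_eq_mul]
  rw [abs_of_pos (by positivity), ← hjac]
  ring

lemma setIntegral_Icc_pi_prod_eq_prod {ι : Type*} [Fintype ι] (f : ι → ℝ → ℝ) (a b : ι → ℝ) :
    ∫ y in Icc a b, ∏ i, f i (y i) = ∏ i, ∫ x in Icc (a i) (b i), f i x := by
  rw [← pi_univ_Icc, volume_pi, Measure.restrict_pi_pi, integral_fintype_prod_eq_prod]

lemma integral_unitCube_exp_neg_mul_sum_rpow (d : ℕ) {p t : ℝ} (hp : 0 < p) (ht : 0 < t) :
    ∫ y in Icc (0 : Fin d → ℝ) 1, exp (-(t * ∑ i, y i ^ p))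
      = ((p * t ^ (1 / p))⁻¹ * lowerIncompleteGamma (1 / p) t) ^ d := by
  have hfactor : ∀ y : Fin d → ℝ, exp (-(t * ∑ i, y i ^ p)) = ∏ i, exp (-(t * y i ^ p)) := by
    intro y
    rw [← exp_sum, Finset.mul_sum, Finset.sum_neg_distrib]
  simp_rw [hfactor]
  rw [setIntegral_Icc_pi_prod_eq_prod (fun _ x => exp (-(t * x ^ p)))]
  simp only [Pi.zero_apply, Pi.one_apply, Finset.prod_const, Finset.card_univ, Fintype.card_fin,
    integral_Icc_eq_integral_Ioo, lowerIncompleteGamma_one_div_eq_integral_exp_neg_mul_rpow hp ht]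
  rw [inv_mul_cancel_left₀ (by positivity)]

lemma lintegral_rpow_mul_exp_neg_mul_Ioi {s a : ℝ} (hs : 0 < s) (ha : 0 < a) :
    ∫⁻ t in Ioi 0, ENNReal.ofReal (t ^ (s - 1) * exp (-(a * t)))
      = ENNReal.ofReal (a ^ (-s) * Gamma s) := by
  have hint : IntegrableOn (fun t : ℝ => t ^ (s - 1) * exp (-(a * t))) (Ioi 0) := by
    simpa using integrableOn_rpow_mul_exp_neg_mul_rpow (p := 1) (by linarith) one_pos ha
  rw [← ofReal_integral_eq_lintegral_ofReal hint, integral_rpow_mul_exp_neg_mul_Ioi hs ha,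
    one_div, inv_rpow ha.le, rpow_neg ha.le]
  filter_upwards [ae_restrict_mem measurableSet_Ioi] with t ht
  exact mul_nonneg (rpow_nonneg (le_of_lt ht) _) (exp_nonneg _)

lemma lintegral_unitCube_rpow_mul_exp_neg_mul_sum_rpow (d : ℕ) {p α t : ℝ} (hp : 0 < p)
    (ht : 0 < t) :
    ∫⁻ y in Icc (0 : Fin d → ℝ) 1, ENNReal.ofReal (t ^ (α / p - 1) * exp (-(t * ∑ i, y i ^ p)))
      = ENNReal.ofReal
          (p ^ (-(d : ℝ)) * (t ^ ((α - d) / p - 1) * lowerIncompleteGamma (1 / p) t ^ d)) := by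
  have hint : IntegrableOn (fun y : Fin d → ℝ => exp (-(t * ∑ i, y i ^ p))) (Icc 0 1) :=
    (Continuous.continuousOn (by fun_prop (disch := exact hp.le))).integrableOn_compact
      isCompact_Icc
  have hpow : t ^ (α / p - 1) * ((p * t ^ (1 / p))⁻¹ * lowerIncompleteGamma (1 / p) t) ^ d
      = p ^ (-(d : ℝ)) * (t ^ ((α - d) / p - 1) * lowerIncompleteGamma (1 / p) t ^ d) := by
    have hsplit : t ^ (α / p - 1) = t ^ ((α - d) / p - 1) * (t ^ (1 / p)) ^ d := by
      rw [← rpow_mul_natCast ht.le, ← rpow_add ht]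
      congr 1
      field_simp
      ring
    rw [hsplit, rpow_neg hp.le, rpow_natCast, mul_pow, inv_pow, mul_pow]
    field_simp
  simp_rw [ENNReal.ofReal_mul (rpow_nonneg ht.le _)]
  rw [lintegral_const_mul' _ _ ENNReal.ofReal_ne_top,
    ← ofReal_integral_eq_lintegral_ofReal hint (ae_of_all _ fun _ => exp_nonneg _),
    integral_unitCube_exp_neg_mul_sum_rpow d hp ht, ← ENNReal.ofReal_mul (rpow_nonneg ht.le _),
    hpow]

lemma ae_unitCube_sum_rpow_pos {d : ℕ} (hd : 0 < d) (p : ℝ) :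
    ∀ᵐ y ∂(volume.restrict (Icc (0 : Fin d → ℝ) 1)), 0 < ∑ i, y i ^ p := by
  have hne : ∀ᵐ y : Fin d → ℝ, y ⟨0, hd⟩ ≠ 0 := by
    rw [volume_pi]
    exact Measure.ae_eval_ne _ _ 0
  filter_upwards [ae_restrict_of_ae hne, ae_restrict_mem measurableSet_Icc] with y hy0 hy
  exact (rpow_pos_of_pos ((hy.1 _).lt_of_ne' hy0) p).trans_le
    (Finset.single_le_sum (fun i _ => rpow_nonneg (hy.1 i) p) (Finset.mem_univ _))

lemma ofReal_Gamma_mul_lintegral_unitCube_sum_rpow_rpow_neg {d : ℕ} (hd : 0 < d) {p α : ℝ}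
    (hp : 0 < p) (hα : 0 < α) :
    ENNReal.ofReal (Gamma (α / p)) *
        ∫⁻ y in Icc (0 : Fin d → ℝ) 1, ENNReal.ofReal ((∑ i, y i ^ p) ^ (-(α / p)))
      = ENNReal.ofReal (p ^ (-(d : ℝ))) *
          ∫⁻ t in Ioi 0,
            ENNReal.ofReal (t ^ ((α - d) / p - 1) * lowerIncompleteGamma (1 / p) t ^ d) := by
  have hs : 0 < α / p := div_pos hα hp
  have hmeas : Measurable fun q : (Fin d → ℝ) × ℝ =>
      ENNReal.ofReal (q.2 ^ (α / p - 1) * exp (-(q.2 * ∑ i, q.1 i ^ p))) := by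
    fun_prop
  calc ENNReal.ofReal (Gamma (α / p)) *
        ∫⁻ y in Icc (0 : Fin d → ℝ) 1, ENNReal.ofReal ((∑ i, y i ^ p) ^ (-(α / p)))
      = ∫⁻ y in Icc (0 : Fin d → ℝ) 1, ∫⁻ t in Ioi 0,
          ENNReal.ofReal (t ^ (α / p - 1) * exp (-(t * ∑ i, y i ^ p))) := by
        rw [← lintegral_const_mul' _ _ ENNReal.ofReal_ne_top]
        refine lintegral_congr_ae ?_
        filter_upwards [ae_unitCube_sum_rpow_pos hd p] with y hy
        simp_rw [mul_comm _ (∑ i, y i ^ p)]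
        rw [lintegral_rpow_mul_exp_neg_mul_Ioi hs hy, mul_comm,
          ENNReal.ofReal_mul (rpow_nonneg hy.le _)]
    _ = ∫⁻ t in Ioi 0, ∫⁻ y in Icc (0 : Fin d → ℝ) 1,
          ENNReal.ofReal (t ^ (α / p - 1) * exp (-(t * ∑ i, y i ^ p))) :=
        lintegral_lintegral_swap hmeas.aemeasurable
    _ = ∫⁻ t in Ioi 0, ENNReal.ofReal
          (p ^ (-(d : ℝ)) * (t ^ ((α - d) / p - 1) * lowerIncompleteGamma (1 / p) t ^ d)) :=
        setLIntegral_congr_fun measurableSet_Ioi fun t ht =>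
          lintegral_unitCube_rpow_mul_exp_neg_mul_sum_rpow d hp ht
    _ = _ := by
        simp_rw [ENNReal.ofReal_mul (rpow_nonneg hp.le _)]
        exact lintegral_const_mul' _ _ ENNReal.ofReal_ne_top

lemma Gamma_mul_integral_unitCube_sum_rpow_rpow_neg {d : ℕ} (hd : 0 < d) {p α : ℝ}
    (hp : 0 < p) (hα : 0 < α) :
    Gamma (α / p) * ∫ y in Icc (0 : Fin d → ℝ) 1, (∑ i, y i ^ p) ^ (-(α / p))
      = p ^ (-(d : ℝ)) *
          ∫ t in Ioi 0, t ^ ((α - d) / p - 1) * lowerIncompleteGamma (1 / p) t ^ d := by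
  have h := congrArg ENNReal.toReal
    (ofReal_Gamma_mul_lintegral_unitCube_sum_rpow_rpow_neg hd hp hα)
  rw [ENNReal.toReal_mul, ENNReal.toReal_mul,
    ENNReal.toReal_ofReal (Gamma_pos_of_pos (div_pos hα hp)).le,
    ENNReal.toReal_ofReal (rpow_nonneg hp.le _)] at h
  rw [integral_eq_lintegral_of_nonneg_ae, integral_eq_lintegral_of_nonneg_ae, h]
  · filter_upwards [ae_restrict_mem measurableSet_Ioi] with t ht
    exact mul_nonneg (rpow_nonneg (le_of_lt ht) _)
      (pow_nonneg (lowerIncompleteGamma_nonneg _ (le_of_lt ht)) d)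
  · exact (Measurable.mul (by fun_prop) ((continuous_lowerIncompleteGamma
      (by positivity)).measurable.pow_const d)).aestronglyMeasurable
  · filter_upwards [ae_restrict_mem measurableSet_Icc] with y hy
    exact rpow_nonneg (Finset.sum_nonneg fun i _ => rpow_nonneg (hy.1 i) _) _
  · exact Measurable.aestronglyMeasurable (by fun_prop)

theorem R_const_incomplete_gamma_general (d : ℕ) (hd : 0 < d) (p α : ℝ)
    (hp : 1 ≤ p) (hα : 0 < α) :
    (2 : ℝ) ^ α *
        ∫ y in Set.Icc (0 : Fin d → ℝ) 1, (∑ i : Fin d, (y i) ^ p) ^ (-(α / p)) =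
      ((2 : ℝ) ^ α * p ^ (-(d : ℝ)) / Real.Gamma (α / p)) *
        ∫ t in Set.Ioi (0 : ℝ), t ^ ((α - d) / p - 1) *
          (∫ z in (0:ℝ)..t, z ^ (1 / p - 1) * Real.exp (-z)) ^ d := by
  have hp0 : 0 < p := by linarith
  have hΓ : Gamma (α / p) ≠ 0 := (Gamma_pos_of_pos (div_pos hα hp0)).ne'
  have h := Gamma_mul_integral_unitCube_sum_rpow_rpow_neg hd hp0 hα
  unfold lowerIncompleteGamma at h
  rw [mul_div_right_comm, mul_assoc, ← h]
  field_simp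

/-- For `p ∈ [1,∞)`, `d ≥ 1` and `α ∈ (0,d)`, the constant
`R(d,p,α) = 2^α ∫_{[0,1]^d} (∑ y_i^p)^{-α/p} dy` equals
`(2^α p^{-d} / Γ(α/p)) ∫_0^∞ t^{(α-d)/p - 1} γ(1/p,t)^d dt`,
where `γ(1/p,t) = ∫_0^t z^{1/p-1} e^{-z} dz` is the lower incomplete gamma
function. -/
theorem R_const_incomplete_gamma (d : ℕ) (hd : 0 < d) (p α : ℝ)
    (hp : 1 ≤ p) (hα : 0 < α) (hαd : α < d) :
    (2 : ℝ) ^ α *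
        ∫ y in Set.Icc (0 : Fin d → ℝ) 1, (∑ i : Fin d, (y i) ^ p) ^ (-(α / p)) =
      ((2 : ℝ) ^ α * p ^ (-(d : ℝ)) / Real.Gamma (α / p)) *
        ∫ t in Set.Ioi (0 : ℝ), t ^ ((α - d) / p - 1) *
          (∫ z in (0:ℝ)..t, z ^ (1 / p - 1) * Real.exp (-z)) ^ d :=
  R_const_incomplete_gamma_general d hd p α hp hα
end

section
/- For $p \in [1, \infty)$ and $\alpha \in (0,2)$, the constant $R(2,p,\alpha) := 2^\alpha \int_{[0,1]^2} (y_1^p + y_2^p)^{-\alpha/p}\, dy_1\, dy_2$ satisfies $R(2,p,\alpha) = \frac{2^\alpha p^{-2}}{\Gamma(\alpha/p)} \cdot \frac{2p}{2-\alpha} \int_0^\infty t^{(\alpha-1)/p - 1}\, \gamma(1/p, t)\, e^{-t}\, dt$, where $\gamma(1/p,t)$ is the lower incomplete gamma function. -/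
open MeasureTheory Real intervalIntegral Set
open scoped ENNReal

/-!
Both sides reduce to `C = ∫₀¹ (1 + u ^ p) ^ (-α/p) du`.

On the left the integrand is symmetric in `(y₀, y₁)`, so the integral over the square is twice the
integral over the triangle `y₁ < y₀`. By homogeneity (`b = a u`) the inner integral is
`∫₀ᵃ (a ^ p + b ^ p) ^ (-α/p) db = a ^ (1 - α) C`, and `∫₀¹ a ^ (1 - α) da = 1 / (2 - α)` since
`α < 2`; hence the left integral is `2 C / (2 - α)`.

On the right the substitution `z = t y ^ p` gives `γ(1/p, t) = p t ^ (1/p) ∫₀¹ exp (-t y ^ p) dy`,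
so the integrand becomes `p ∫₀¹ t ^ (α/p - 1) exp (-(1 + y ^ p) t) dy`. After Fubini (dominated by
the Gamma integrand), the `t`-integral is `Γ(α/p) (1 + y ^ p) ^ (-α/p)`, so the right integral is
`p Γ(α/p) C`.
-/

theorem lintegral_prod_self_eq_two_mul_of_symm (μ : Measure ℝ) [SFinite μ] [NullSingletonClass μ]
    {g : ℝ × ℝ → ℝ≥0∞} (hg : Measurable g) (hsymm : ∀ a b, g (a, b) = g (b, a)) :
    ∫⁻ q, g q ∂μ.prod μ = 2 * ∫⁻ a, ∫⁻ b in Iio a, g (a, b) ∂μ ∂μ := by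
  have hlower : ∀ a, ∫⁻ b in Iio a, g (a, b) ∂μ =
      ∫⁻ b, {q : ℝ × ℝ | q.2 < q.1}.indicator g (a, b) ∂μ :=
    fun a => (lintegral_indicator measurableSet_Iio _).symm
  have hupper : ∀ a, ∫⁻ b in Ioi a, g (a, b) ∂μ =
      ∫⁻ b, {q : ℝ × ℝ | q.1 < q.2}.indicator g (a, b) ∂μ :=
    fun a => (lintegral_indicator measurableSet_Ioi _).symm
  have hsplit : ∀ a, ∫⁻ b, g (a, b) ∂μ =
      ∫⁻ b in Iio a, g (a, b) ∂μ + ∫⁻ b in Ioi a, g (a, b) ∂μ := fun a => by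
    rw [← lintegral_union measurableSet_Ioi Ioi_disjoint_Iio_same.symm,
      Iio_union_Ioi, restrict_compl_singleton]
  have hswap : ∫⁻ a, ∫⁻ b in Ioi a, g (a, b) ∂μ ∂μ = ∫⁻ a, ∫⁻ b in Iio a, g (a, b) ∂μ ∂μ := by
    simp_rw [hupper, hlower]
    rw [lintegral_lintegral_swap (f := fun a b => {q : ℝ × ℝ | q.1 < q.2}.indicator g (a, b))
      (hg.indicator (measurableSet_lt measurable_fst measurable_snd)).aemeasurable]
    simp only [indicator, mem_ofPred_eq, hsymm]
  have hmeas : Measurable fun a => ∫⁻ b in Iio a, g (a, b) ∂μ := by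
    simp_rw [hlower]
    exact (hg.indicator (measurableSet_lt measurable_snd measurable_fst)).lintegral_prod_right'
  rw [lintegral_prod _ hg.aemeasurable]
  simp_rw [hsplit]
  rw [lintegral_add_left hmeas, hswap, two_mul]

theorem setLIntegral_pi_finTwo_eq_lintegral_prod (s : Set ℝ) (f : ℝ × ℝ → ℝ≥0∞) :
    ∫⁻ y in univ.pi fun _ : Fin 2 => s, f (y 0, y 1) =
      ∫⁻ q, f q ∂(volume.restrict s).prod (volume.restrict s) := by
  rw [volume_pi, Measure.restrict_pi_pi]
  exact (measurePreserving_finTwoArrow _).lintegral_comp_emb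
    MeasurableEquiv.finTwoArrow.measurableEmbedding f

theorem lintegral_Ioo_zero_one_ofReal_rpow {r : ℝ} (hr : -1 < r) :
    ∫⁻ a in Ioo 0 1, ENNReal.ofReal (a ^ r) = ENNReal.ofReal (1 / (r + 1)) := by
  rw [← ofReal_integral_eq_lintegral_ofReal
      ((intervalIntegrable_rpow' hr).1.mono_set Ioo_subset_Ioc_self)
      ((ae_restrict_mem measurableSet_Ioo).mono fun a ha => rpow_nonneg ha.1.le r),
    ← integral_Ioc_eq_integral_Ioo, ← integral_of_le zero_le_one,
    integral_rpow (Or.inl hr), one_rpow, zero_rpow (by linarith), sub_zero]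

theorem integral_Ioi_intervalIntegral_rpow_mul_exp_neg {s : ℝ} (hs : 0 < s) (p : ℝ) :
    ∫ t in Ioi 0, ∫ y in 0..1, t ^ (s - 1) * exp (-((1 + y ^ p) * t)) =
      Gamma s * ∫ y in 0..1, (1 + y ^ p) ^ (-s) := by
  have hdom : Integrable (fun q : ℝ × ℝ => exp (-q.1) * q.1 ^ (s - 1) * 1)
      ((volume.restrict (Ioi 0)).prod (volume.restrict (Ioc 0 1))) :=
    (GammaIntegral_convergent hs).mul_prod (integrableOn_const (by simp))
  have hint : Integrable (Function.uncurry fun t y : ℝ => t ^ (s - 1) * exp (-((1 + y ^ p) * t)))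
      ((volume.restrict (Ioi 0)).prod (volume.restrict (Ioc 0 1))) := by
    refine hdom.mono' (Measurable.aestronglyMeasurable (by fun_prop)) ?_
    rw [Measure.prod_restrict]
    filter_upwards [ae_restrict_mem (measurableSet_Ioi.prod measurableSet_Ioc)]
      with ⟨t, y⟩ ⟨ht, hy⟩
    have ht : 0 < t := ht
    have hyp : 0 ≤ y ^ p := rpow_nonneg hy.1.le p
    have hts : 0 ≤ t ^ (s - 1) := rpow_nonneg ht.le _
    rw [Function.uncurry_apply_pair, norm_of_nonneg (by positivity), mul_one, mul_comm]
    gcongr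
    nlinarith
  simp_rw [integral_of_le zero_le_one]
  rw [integral_integral_swap hint, ← MeasureTheory.integral_const_mul]
  refine setIntegral_congr_fun measurableSet_Ioc fun y hy => ?_
  have hy : 0 < 1 + y ^ p := by have := rpow_nonneg hy.1.le p; positivity
  rw [integral_rpow_mul_exp_neg_mul_Ioi hs hy, one_div, inv_rpow hy.le, ← rpow_neg hy.le, mul_comm]

section

variable {p α : ℝ}

theorem intervalIntegral_rpow_add_rpow_eq_rpow_mul (hp : 0 < p) {a : ℝ} (ha : 0 < a) :
    ∫ b in 0..a, (a ^ p + b ^ p) ^ (-(α / p)) =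
      a ^ (1 - α) * ∫ u in 0..1, (1 + u ^ p) ^ (-(α / p)) := by
  have hscale := integral_comp_mul_left (fun b => (a ^ p + b ^ p) ^ (-(α / p))) ha.ne'
    (a := 0) (b := 1)
  rw [mul_zero, mul_one] at hscale
  rw [← smul_inv_smul₀ ha.ne' (∫ b in 0..a, _), ← hscale, smul_eq_mul,
    ← intervalIntegral.integral_const_mul, ← intervalIntegral.integral_const_mul]
  refine integral_congr fun u hu => ?_
  rw [uIcc_of_le zero_le_one] at hu
  have hap : 0 < a ^ p := rpow_pos_of_pos ha p
  have hup : 0 ≤ u ^ p := rpow_nonneg hu.1 p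
  rw [mul_rpow ha.le hu.1, ← mul_one_add, mul_rpow hap.le (by positivity), ← rpow_mul ha.le,
    mul_neg, mul_div_cancel₀ α hp.ne', ← mul_assoc, sub_eq_add_neg, rpow_add ha, rpow_one]

theorem lintegral_Ioo_ofReal_rpow_add_rpow (hp : 0 < p) {a : ℝ} (ha : 0 < a) :
    ∫⁻ b in Ioo 0 a, ENNReal.ofReal ((a ^ p + b ^ p) ^ (-(α / p))) =
      ENNReal.ofReal (a ^ (1 - α) * ∫ u in 0..1, (1 + u ^ p) ^ (-(α / p))) := by
  have hbase : ∀ b ∈ Icc 0 a, 0 < a ^ p + b ^ p := fun b hb =>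
    add_pos_of_pos_of_nonneg (rpow_pos_of_pos ha p) (rpow_nonneg hb.1 p)
  have hcont : ContinuousOn (fun b : ℝ => (a ^ p + b ^ p) ^ (-(α / p))) (Icc 0 a) :=
    ((continuous_const.add (continuous_rpow_const hp.le)).continuousOn).rpow_const
      fun b hb => Or.inl (hbase b hb).ne'
  rw [← ofReal_integral_eq_lintegral_ofReal
      ((hcont.integrableOn_Icc).mono_set Ioo_subset_Icc_self)
      ((ae_restrict_mem measurableSet_Ioo).mono fun b hb =>
        rpow_nonneg (hbase b (Ioo_subset_Icc_self hb)).le _),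
    ← integral_Ioc_eq_integral_Ioo, ← integral_of_le ha.le,
    intervalIntegral_rpow_add_rpow_eq_rpow_mul hp ha]

theorem setIntegral_Icc_finTwo_rpow_add_rpow (hp : 0 < p) (hα : α < 2) :
    ∫ y in Icc (0 : Fin 2 → ℝ) 1, ((y 0) ^ p + (y 1) ^ p) ^ (-(α / p)) =
      2 / (2 - α) * ∫ u in 0..1, (1 + u ^ p) ^ (-(α / p)) := by
  set C := ∫ u in 0..1, (1 + u ^ p) ^ (-(α / p))
  set ν := volume.restrict (Ioo (0 : ℝ) 1)
  have hC : 0 ≤ C := integral_nonneg zero_le_one fun u hu =>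
    rpow_nonneg (by have := rpow_nonneg hu.1 p; positivity) _
  have hnonneg : 0 ≤ᵐ[volume.restrict (Icc (0 : Fin 2 → ℝ) 1)]
      fun y => ((y 0) ^ p + (y 1) ^ p) ^ (-(α / p)) := by
    filter_upwards [ae_restrict_mem measurableSet_Icc] with y hy
    exact rpow_nonneg (add_nonneg (rpow_nonneg (hy.1 0) p) (rpow_nonneg (hy.1 1) p)) _
  have hinner : ∀ᵐ a ∂ν, ∫⁻ b in Iio a, ENNReal.ofReal ((a ^ p + b ^ p) ^ (-(α / p))) ∂ν =
      ENNReal.ofReal (a ^ (1 - α)) * ENNReal.ofReal C := by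
    filter_upwards [ae_restrict_mem measurableSet_Ioo] with a ha
    rw [Measure.restrict_restrict measurableSet_Iio, Iio_inter_Ioo, min_eq_left ha.2.le,
      lintegral_Ioo_ofReal_rpow_add_rpow hp ha.1, ENNReal.ofReal_mul (rpow_nonneg ha.1.le _)]
  have hcube :
      ∫⁻ y in Icc (0 : Fin 2 → ℝ) 1, ENNReal.ofReal (((y 0) ^ p + (y 1) ^ p) ^ (-(α / p))) =
      ∫⁻ q, ENNReal.ofReal ((q.1 ^ p + q.2 ^ p) ^ (-(α / p))) ∂ν.prod ν := by
    rw [← pi_univ_Icc]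
    refine (setLIntegral_pi_finTwo_eq_lintegral_prod (Icc 0 1) fun q =>
      ENNReal.ofReal ((q.1 ^ p + q.2 ^ p) ^ (-(α / p)))).trans ?_
    rw [Measure.restrict_congr_set (Ioo_ae_eq_Icc (μ := volume)).symm]
  rw [integral_eq_lintegral_of_nonneg_ae hnonneg (Measurable.aestronglyMeasurable (by fun_prop)),
    hcube, lintegral_prod_self_eq_two_mul_of_symm ν (by fun_prop) fun a b => by rw [add_comm],
    lintegral_congr_ae hinner, lintegral_mul_const _ (by fun_prop),
    lintegral_Ioo_zero_one_ofReal_rpow (by linarith)]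
  rw [show 1 - α + 1 = 2 - α by ring, ENNReal.toReal_mul, ENNReal.toReal_mul,
    ENNReal.toReal_ofReal hC, ENNReal.toReal_ofReal (one_div_pos.2 (by linarith)).le,
    ENNReal.toReal_ofNat]
  ring

theorem intervalIntegral_rpow_mul_exp_neg_eq_mul_integral (hp : 0 < p) {t : ℝ}
    (ht : 0 < t) :
    ∫ z in 0..t, z ^ (1 / p - 1) * exp (-z) =
      p * t ^ (1 / p) * ∫ y in 0..1, exp (-(t * y ^ p)) := by
  have hsub := integral_comp_mul_deriv_of_deriv_nonneg (a := 0) (b := 1)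
    (f := fun y => t * y ^ p) (f' := fun y => t * (p * y ^ (p - 1)))
    (g := fun z => z ^ (1 / p - 1) * exp (-z))
    (((continuous_rpow_const hp.le).const_mul t).continuousOn)
    (fun y hy => by
      rw [min_eq_left zero_le_one] at hy
      exact ((hasDerivAt_rpow_const (Or.inl hy.1.ne')).const_mul t))
    (fun y hy => by
      rw [min_eq_left zero_le_one] at hy
      have := rpow_pos_of_pos hy.1 (p - 1)
      positivity)
  simp only [Function.comp_apply, zero_rpow hp.ne', mul_zero, one_rpow, mul_one] at hsub
  rw [← hsub, ← intervalIntegral.integral_const_mul]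
  refine integral_congr_ae (Filter.Eventually.of_forall fun y hy => ?_)
  rw [uIoc_of_le zero_le_one] at hy
  have hy0 : 0 < y := hy.1
  have hjac : (t * y ^ p) ^ (1 / p - 1) * (t * y ^ (p - 1)) = t ^ (1 / p) := by
    rw [mul_rpow ht.le (rpow_nonneg hy0.le _), ← rpow_mul hy0.le, rpow_sub_one ht.ne',
      rpow_sub_one hy0.ne', show p * (1 / p - 1) = 1 - p by field_simp,
      rpow_sub hy0, rpow_one]
    field_simp
  rw [← hjac]
  ring

theorem rpow_mul_intervalIntegral_mul_exp_neg_eq (hp : 0 < p) {t : ℝ} (ht : 0 < t) :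
    t ^ ((α - 1) / p - 1) * (∫ z in 0..t, z ^ (1 / p - 1) * exp (-z)) * exp (-t) =
      p * ∫ y in 0..1, t ^ (α / p - 1) * exp (-((1 + y ^ p) * t)) := by
  have hexp : ∀ y : ℝ, t ^ (α / p - 1) * exp (-((1 + y ^ p) * t)) =
      t ^ (α / p - 1) * exp (-t) * exp (-(t * y ^ p)) := fun y => by
    rw [mul_assoc, ← exp_add]
    ring_nf
  have hpow : t ^ ((α - 1) / p - 1) * t ^ (1 / p) = t ^ (α / p - 1) := by
    rw [← rpow_add ht]
    ring_nf
  simp_rw [hexp, intervalIntegral.integral_const_mul,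
    intervalIntegral_rpow_mul_exp_neg_eq_mul_integral hp ht, ← hpow]
  ring

end

/-- For `p ∈ [1,∞)` and `α ∈ (0,2)`, the constant
`R(2,p,α) = 2^α ∫_{[0,1]^2} (y_1^p + y_2^p)^{-α/p} dy` equals
`(2^α p^{-2}/Γ(α/p)) · (2p/(2-α)) ∫_0^∞ t^{(α-1)/p - 1} γ(1/p,t) e^{-t} dt`. -/
theorem R_two_p_alpha (p α : ℝ) (hp : 1 ≤ p) (hα : 0 < α) (hα2 : α < 2) :
    (2 : ℝ) ^ α *
        ∫ y in Set.Icc (0 : Fin 2 → ℝ) 1, ((y 0) ^ p + (y 1) ^ p) ^ (-(α / p)) =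
      ((2 : ℝ) ^ α * p ^ (-(2 : ℝ)) / Real.Gamma (α / p)) * (2 * p / (2 - α)) *
        ∫ t in Set.Ioi (0 : ℝ), t ^ ((α - 1) / p - 1) *
          (∫ z in (0:ℝ)..t, z ^ (1 / p - 1) * Real.exp (-z)) * Real.exp (-t) := by
  have hp0 : 0 < p := by linarith
  have hΓ : Gamma (α / p) ≠ 0 := (Gamma_pos_of_pos (by positivity)).ne'
  have h2α : 2 - α ≠ 0 := by linarith
  rw [setIntegral_Icc_finTwo_rpow_add_rpow hp0 hα2,
    setIntegral_congr_fun measurableSet_Ioi fun t ht =>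
      rpow_mul_intervalIntegral_mul_exp_neg_eq hp0 ht,
    MeasureTheory.integral_const_mul,
    integral_Ioi_intervalIntegral_rpow_mul_exp_neg (by positivity) p, rpow_neg hp0.le, rpow_two]
  field_simp
end
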